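/- For β = 3 and α = (1/3,1/3,1/3), the third-order Taylor polynomial of f_{β,α} at the point ν = (1/3,1/3,1/3), expressed in coordinates x = (√3/2)(ν₁-ν₂), y = (1/2)(3ν₃-1), equals f_{β,α}(1/3,1/3,1/3) - y³/3 + x²y; i.e. all first and second order terms vanish and the cubic part is x²y - y³/3. -/

import Mathlib

/-!
At `β = 3` the point `ν = 1/3` is a degenerate critical point of each summand
`g ν = -(3/2) ν² + ν log (3ν)`: `g (1/3 + u) = -1/6 - (3/2) u³ + O(u⁴)`.
Writing `ν = (1/3 + u₁, 1/3 + u₂, 1/3 + u₃)` with `u = (x/√3 - y/3, -x/√3 - y/3, 2y/3)`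
linear in `(x, y)`, the free energy is `-1/2 - (3/2) ∑ uᵢ³ + O(‖(x, y)‖⁴)`,
and `-(3/2) ∑ uᵢ³ = x²y - y³/3`.
-/

/-- The free energy f_{3,uniform} in symmetric coordinates
x = (√3/2)(ν₁-ν₂), y = (1/2)(3ν₃-1). -/
noncomputable def pottsSymmetric (p : ℝ × ℝ) : ℝ :=
  let ν₁ := (1 - p.2)/3 + p.1/Real.sqrt 3
  let ν₂ := (1 - p.2)/3 - p.1/Real.sqrt 3
  let ν₃ := (1 + 2*p.2)/3;
  -(3/2) * (ν₁^2 + ν₂^2 + ν₃^2)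
    + ν₁ * Real.log (ν₁/(1/3)) + ν₂ * Real.log (ν₂/(1/3))
    + ν₃ * Real.log (ν₃/(1/3))

open Asymptotics

open Topology Real

lemma log_one_add_sub_taylor_isBigO :
    (fun t : ℝ => log (1 + t) - (t - t ^ 2 / 2 + t ^ 3 / 3)) =O[𝓝 0] fun t => t ^ 4 := by
  refine IsBigO.of_bound 2 ?_
  filter_upwards [Metric.ball_mem_nhds (0 : ℝ) one_half_pos] with t ht
  rw [Metric.mem_ball, dist_zero_right, norm_eq_abs] at ht
  have h := abs_log_sub_add_sum_range_le (x := -t) (by rw [abs_neg]; linarith) 3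
  norm_num [Finset.sum_range_succ] at h
  rw [norm_eq_abs, norm_pow, norm_eq_abs]
  calc |log (1 + t) - (t - t ^ 2 / 2 + t ^ 3 / 3)|
      = |-t + t ^ 2 / 2 + (-t) ^ 3 / 3 + log (1 + t)| := by congr 1; ring
    _ ≤ |t| ^ 4 / (1 - |t|) := h
    _ ≤ 2 * |t| ^ 4 := by
        rw [div_le_iff₀ (by linarith)]
        nlinarith [pow_nonneg (abs_nonneg t) 4]

/-- `g (1/3 + u)` for the summand `g ν = -(3/2) ν² + ν log (ν / (1/3))` of `pottsSymmetric`. -/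
noncomputable def pottsSummand (u : ℝ) : ℝ :=
  -(3 / 2) * (1 / 3 + u) ^ 2 + (1 / 3 + u) * log (1 + 3 * u)

lemma pottsSymmetric_eq (p : ℝ × ℝ) :
    pottsSymmetric p = pottsSummand (p.1 / √3 - p.2 / 3) + pottsSummand (-(p.1 / √3) - p.2 / 3)
      + pottsSummand (2 * p.2 / 3) := by
  simp only [pottsSymmetric, pottsSummand]
  ring_nf

lemma pottsSymmetric_zero : pottsSymmetric (0, 0) = -1 / 2 := by
  rw [pottsSymmetric_eq]; norm_num [pottsSummand]

lemma pottsSummand_sub_isBigO :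
    (fun u => pottsSummand u - (-1 / 6 - 3 / 2 * u ^ 3)) =O[𝓝 0] fun u => u ^ 4 := by
  have hlog : (fun u : ℝ => log (1 + 3 * u) - (3 * u - (3 * u) ^ 2 / 2 + (3 * u) ^ 3 / 3))
      =O[𝓝 0] fun u => u ^ 4 := by
    refine (log_one_add_sub_taylor_isBigO.comp_tendsto ?_).trans ?_
    · simpa using (continuous_const_mul (3 : ℝ)).tendsto' 0 0 (mul_zero 3)
    · simpa only [Function.comp_def, mul_pow] using (isBigO_refl _ _).const_mul_left (3 ^ 4 : ℝ)
  have hfac : (fun u : ℝ => 1 / 3 + u) =O[𝓝 0] fun _ => (1 : ℝ) :=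
    ((continuous_const_add _).tendsto 0).isBigO_one ℝ
  -- `pottsSummand u + 1/6 + (3/2) u³ = (1/3 + u) * (log (1 + 3u) - cubic Taylor polynomial) + 9 u⁴`
  have hprod := (hfac.mul hlog).congr_right fun u => one_mul (u ^ 4)
  refine (hprod.add ((isBigO_refl _ _).const_mul_left 9)).congr_left fun u => ?_
  simp only [pottsSummand]
  ring

lemma pottsSummand_sub_isLittleO :
    (fun u => pottsSummand u - (-1 / 6 - 3 / 2 * u ^ 3)) =o[𝓝 0] fun u => u ^ 3 :=
  pottsSummand_sub_isBigO.trans_isLittleO (isLittleO_pow_pow (by norm_num))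

lemma Asymptotics.IsLittleO.comp_isBigO_norm {E : Type*} [SeminormedAddCommGroup E]
    {f : ℝ → ℝ} {n : ℕ} (hf : f =o[𝓝 0] fun u => u ^ n) {u : E → ℝ}
    (hu : u =O[𝓝 0] fun p => ‖p‖) : (fun p => f (u p)) =o[𝓝 0] fun p => ‖p‖ ^ n :=
  (hf.comp_tendsto (hu.trans_tendsto tendsto_norm_zero)).trans_isBigO (hu.pow n)

/-- Third-order Taylor expansion of f_{3,uniform} at the uniform distribution
in symmetric coordinates: all first and second order terms vanish and the
cubic part is `x²y - y³/3` — the germ of the elliptic umbilic. -/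
theorem elliptic_umbilic_taylor :
    (fun p : ℝ × ℝ =>
        pottsSymmetric p - (pottsSymmetric (0, 0) - p.2^3/3 + p.1^2 * p.2))
      =o[nhds (0 : ℝ × ℝ)] fun p => ‖p‖^3 := by
  have hx : (fun p : ℝ × ℝ => p.1) =O[𝓝 0] fun p => ‖p‖ := isBigO_fst_prod'.norm_right
  have hy : (fun p : ℝ × ℝ => p.2) =O[𝓝 0] fun p => ‖p‖ := isBigO_snd_prod'.norm_right
  have h₁ := pottsSummand_sub_isLittleO.comp_isBigO_norm (u := fun p => p.1 / √3 - p.2 / 3)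
    (((hx.const_mul_left (√3)⁻¹).sub (hy.const_mul_left 3⁻¹)).congr_left fun p => by ring)
  have h₂ := pottsSummand_sub_isLittleO.comp_isBigO_norm (u := fun p => -(p.1 / √3) - p.2 / 3)
    (((hx.const_mul_left (-(√3)⁻¹)).sub (hy.const_mul_left 3⁻¹)).congr_left fun p => by ring)
  have h₃ := pottsSummand_sub_isLittleO.comp_isBigO_norm (u := fun p => 2 * p.2 / 3)
    ((hy.const_mul_left (2 / 3)).congr_left fun p => by ring)
  refine ((h₁.add h₂).add h₃).congr_left fun p => ?_
  have hs : (p.1 / √3) ^ 2 = p.1 ^ 2 / 3 := by rw [div_pow, sq_sqrt zero_le_three]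
  rw [pottsSymmetric_eq p, pottsSymmetric_zero]
  linear_combination (-3 * p.2) * hs
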